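/- arXiv:2209.03176 — 3 statements merged into one kernel-verified Lean document; each statement's English description precedes it below -/
import Mathlib

section
/- Let f : 2^V → ℝ≥0 be monotone and submodular with f(∅) = 0, and let S_b be the set obtained by b steps of the greedy algorithm (each step adding an element of maximum marginal gain). Then for any set S° of size at most k, f(S_b) ≥ (1 − (1 − 1/k)^b) · f(S°). -/
lemma submod_union_bound {V : Type*} [DecidableEq V] (f : Finset V → ℝ)
    (hsub : ∀ S T : Finset V, S ⊆ T → ∀ v : V,
      f (insert v S) - f S ≥ f (insert v T) - f T) :
    ∀ (T S : Finset V), f (S ∪ T) ≤ f S + ∑ v ∈ T, (f (insert v S) - f S) := by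
  intro T
  induction T using Finset.induction_on with
  | empty => intro S; simp
  | @insert a T ha ih =>
    intro S
    rw [Finset.union_insert, Finset.sum_insert ha]
    have h1 := hsub S (S ∪ T) Finset.subset_union_left a
    have h2 := ih S
    linarith

/-- Greedy guarantee: `b` greedy steps on a normalized monotone submodular function achieve
`f(S_b) ≥ (1 − (1 − 1/k)^b) · f(S°)` for any set `S°` of size at most `k`. -/
theorem greedy_partial_guarantee {V : Type*} [Fintype V] [DecidableEq V]
    (f : Finset V → ℝ) (k b : ℕ) (hk : 1 ≤ k)
    (hnonneg : ∀ S : Finset V, 0 ≤ f S) (hempty : f ∅ = 0)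
    (hmono : ∀ S T : Finset V, S ⊆ T → f S ≤ f T)
    (hsub : ∀ S T : Finset V, S ⊆ T → ∀ v : V,
      f (insert v S) - f S ≥ f (insert v T) - f T)
    (Sseq : ℕ → Finset V) (h0 : Sseq 0 = ∅)
    (hgreedy : ∀ a < b, ∃ v : V, v ∉ Sseq a ∧ Sseq (a + 1) = insert v (Sseq a) ∧
      ∀ u : V, f (insert u (Sseq a)) - f (Sseq a) ≤ f (insert v (Sseq a)) - f (Sseq a))
    (Sopt : Finset V) (hcard : Sopt.card ≤ k) :
    f (Sseq b) ≥ (1 - (1 - 1 / (k : ℝ)) ^ b) * f Sopt := by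
  have hk' : (1 : ℝ) ≤ (k : ℝ) := by exact_mod_cast hk
  have hkpos : (0 : ℝ) < (k : ℝ) := by linarith
  have hc0 : (0 : ℝ) ≤ 1 - 1 / (k : ℝ) := by
    have : 1 / (k : ℝ) ≤ 1 := by
      rw [div_le_one hkpos]; exact hk'
    linarith
  have key : ∀ a, a ≤ b →
      f Sopt - f (Sseq a) ≤ (1 - 1 / (k : ℝ)) ^ a * f Sopt := by
    intro a
    induction a with
    | zero => intro _; simp [h0, hempty]
    | succ a ih =>
      intro hab
      have ha : a < b := by omega
      have hga := ih (le_of_lt ha)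
      obtain ⟨v, hv, hS, hmax⟩ := hgreedy a ha
      -- step inequality: f Sopt - f (Sseq a) ≤ k * Δ
      have hΔ0 : 0 ≤ f (insert v (Sseq a)) - f (Sseq a) := by
        have := hmono (Sseq a) (insert v (Sseq a)) (Finset.subset_insert v _)
        linarith
      have hstep : f Sopt - f (Sseq a) ≤
          (k : ℝ) * (f (insert v (Sseq a)) - f (Sseq a)) := by
        have h1 : f Sopt ≤ f (Sseq a ∪ Sopt) :=
          hmono _ _ Finset.subset_union_right
        have h2 := submod_union_bound f hsub Sopt (Sseq a)
        have h3 : ∑ u ∈ Sopt, (f (insert u (Sseq a)) - f (Sseq a)) ≤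
            (Sopt.card : ℝ) * (f (insert v (Sseq a)) - f (Sseq a)) := by
          calc ∑ u ∈ Sopt, (f (insert u (Sseq a)) - f (Sseq a))
              ≤ ∑ _u ∈ Sopt, (f (insert v (Sseq a)) - f (Sseq a)) :=
                Finset.sum_le_sum fun u _ => hmax u
            _ = (Sopt.card : ℝ) * (f (insert v (Sseq a)) - f (Sseq a)) := by
                rw [Finset.sum_const, nsmul_eq_mul]
        have h4 : (Sopt.card : ℝ) * (f (insert v (Sseq a)) - f (Sseq a)) ≤
            (k : ℝ) * (f (insert v (Sseq a)) - f (Sseq a)) := by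
          apply mul_le_mul_of_nonneg_right _ hΔ0
          exact_mod_cast hcard
        linarith
      rw [hS]
      have hrec : f Sopt - f (insert v (Sseq a)) ≤
          (1 - 1 / (k : ℝ)) * (f Sopt - f (Sseq a)) := by
        have hk0 : (k : ℝ) ≠ 0 := ne_of_gt hkpos
        have : (1 - 1 / (k : ℝ)) * (f Sopt - f (Sseq a)) =
            (f Sopt - f (Sseq a)) - (f Sopt - f (Sseq a)) / k := by ring
        rw [this]
        have : (f Sopt - f (Sseq a)) / k ≤ f (insert v (Sseq a)) - f (Sseq a) := by
          rw [div_le_iff₀ hkpos]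
          linarith [hstep]
        linarith
      calc f Sopt - f (insert v (Sseq a))
          ≤ (1 - 1 / (k : ℝ)) * (f Sopt - f (Sseq a)) := hrec
        _ ≤ (1 - 1 / (k : ℝ)) * ((1 - 1 / (k : ℝ)) ^ a * f Sopt) :=
            mul_le_mul_of_nonneg_left hga hc0
        _ = (1 - 1 / (k : ℝ)) ^ (a + 1) * f Sopt := by ring
  have := key b le_rfl
  nlinarith [this]
end

section
/- Let f : 2^V → ℝ≥0 be monotone and submodular, let S_b ⊆ V be any set, and let S_{k−b} be obtained from S_b by k−b greedy steps (maximizing marginal gain over V \ current set). Then for any set S° with |S°| ≤ k, f(S_b ∪ S_{k−b}) ≥ (1 − (1 − 1/k)^{k−b}) · f(S°) + (1 − 1/k)^{k−b} · f(S_b). -/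
/-!
Write `A` for the current greedy set and `O` for the comparison set, `|O| ≤ k`. By monotonicity
and submodularity, `f O - f A ≤ f (O ∪ A) - f A` is at most the sum of the marginal gains of the
elements of `O` at `A`, hence at most `k` times the greedy gain. So one greedy step shrinks the
gap `f O - f A` by a factor `1 - 1/k`, and after `k - b` steps the gap is at most
`(1 - 1/k)^(k-b) (f O - f S_b)`.
-/

section GreedyStep

variable {V : Type*} [DecidableEq V] (f : Finset V → ℝ)

theorem sub_le_sum_marginal_of_submodular
    (hsub : ∀ S T : Finset V, S ⊆ T → ∀ v : V, f (insert v S) - f S ≥ f (insert v T) - f T)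
    (A S : Finset V) :
    f (S ∪ A) - f A ≤ ∑ v ∈ S, (f (insert v A) - f A) := by
  induction S using Finset.induction with
  | empty => simp
  | @insert x S hx ih =>
    have hx_gain := hsub A (S ∪ A) Finset.subset_union_right x
    rw [Finset.insert_union, Finset.sum_insert hx]
    linarith

variable {f}
variable (hmono : ∀ S T : Finset V, S ⊆ T → f S ≤ f T)
  (hsub : ∀ S T : Finset V, S ⊆ T → ∀ v : V, f (insert v S) - f S ≥ f (insert v T) - f T)
include hmono hsub

theorem sub_le_card_mul_marginal_of_isMax {A : Finset V} {v : V}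
    (hmax : ∀ u : V, f (insert u A) - f A ≤ f (insert v A) - f A) (O : Finset V) :
    f O - f A ≤ O.card * (f (insert v A) - f A) :=
  calc f O - f A
      ≤ f (O ∪ A) - f A := by linarith [hmono O (O ∪ A) Finset.subset_union_left]
    _ ≤ ∑ u ∈ O, (f (insert u A) - f A) := sub_le_sum_marginal_of_submodular f hsub A O
    _ ≤ ∑ _u ∈ O, (f (insert v A) - f A) := Finset.sum_le_sum fun u _ => hmax u
    _ = O.card * (f (insert v A) - f A) := by rw [Finset.sum_const, nsmul_eq_mul]

theorem sub_insert_le_of_isMax {k : ℕ} (hk : 0 < k) {A O : Finset V} (hO : O.card ≤ k)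
    {v : V} (hmax : ∀ u : V, f (insert u A) - f A ≤ f (insert v A) - f A) :
    f O - f (insert v A) ≤ (1 - 1 / (k : ℝ)) * (f O - f A) := by
  have hk' : (0 : ℝ) < k := by exact_mod_cast hk
  have hgain : 0 ≤ f (insert v A) - f A := by
    linarith [hmono A (insert v A) (Finset.subset_insert v A)]
  have hO' : (O.card : ℝ) ≤ k := by exact_mod_cast hO
  have hgap : f O - f A ≤ k * (f (insert v A) - f A) :=
    (sub_le_card_mul_marginal_of_isMax hmono hsub hmax O).trans
      (mul_le_mul_of_nonneg_right hO' hgain)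
  have hgap' : (f O - f A) / k ≤ f (insert v A) - f A := by
    rwa [div_le_iff₀ hk', mul_comm]
  have hexpand : (1 - 1 / (k : ℝ)) * (f O - f A) = (f O - f A) - (f O - f A) / k := by ring
  linarith

end GreedyStep

theorem greedy_continuation_guarantee_general {V : Type*} [DecidableEq V]
    (f : Finset V → ℝ) (k b : ℕ)
    (hmono : ∀ S T : Finset V, S ⊆ T → f S ≤ f T)
    (hsub : ∀ S T : Finset V, S ⊆ T → ∀ v : V,
      f (insert v S) - f S ≥ f (insert v T) - f T)
    (Sb : Finset V) (T : ℕ → Finset V) (h0 : T 0 = Sb)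
    (hgreedy : ∀ a < k - b, ∃ v : V, v ∉ T a ∧ T (a + 1) = insert v (T a) ∧
      ∀ u : V, f (insert u (T a)) - f (T a) ≤ f (insert v (T a)) - f (T a))
    (Sopt : Finset V) (hcard : Sopt.card ≤ k) :
    f (T (k - b)) ≥ (1 - (1 - 1 / (k : ℝ)) ^ (k - b)) * f Sopt +
      (1 - 1 / (k : ℝ)) ^ (k - b) * f Sb := by
  have hq : 0 ≤ 1 - 1 / (k : ℝ) := by
    rw [one_div, sub_nonneg]
    exact Nat.cast_inv_le_one k
  have hgap := le_geom (u := fun a => f Sopt - f (T a)) hq (k - b) fun a ha => by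
    obtain ⟨v, -, hstep, hmax⟩ := hgreedy a ha
    rw [hstep]
    exact sub_insert_le_of_isMax hmono hsub (by omega) hcard hmax
  simp only [h0] at hgap
  linarith

/-- Greedy continuation guarantee: starting from any `S_b` and performing `k − b` greedy
steps, `f(S_b ∪ S_{k−b}) ≥ (1 − (1 − 1/k)^{k−b})·f(S°) + (1 − 1/k)^{k−b}·f(S_b)`. -/
theorem greedy_continuation_guarantee {V : Type*} [Fintype V] [DecidableEq V]
    (f : Finset V → ℝ) (k b : ℕ) (hk : 1 ≤ k) (hb : b ≤ k)
    (hmono : ∀ S T : Finset V, S ⊆ T → f S ≤ f T)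
    (hsub : ∀ S T : Finset V, S ⊆ T → ∀ v : V,
      f (insert v S) - f S ≥ f (insert v T) - f T)
    (Sb : Finset V) (T : ℕ → Finset V) (h0 : T 0 = Sb)
    (hgreedy : ∀ a < k - b, ∃ v : V, v ∉ T a ∧ T (a + 1) = insert v (T a) ∧
      ∀ u : V, f (insert u (T a)) - f (T a) ≤ f (insert v (T a)) - f (T a))
    (Sopt : Finset V) (hcard : Sopt.card ≤ k) :
    f (T (k - b)) ≥ (1 - (1 - 1 / (k : ℝ)) ^ (k - b)) * f Sopt +
      (1 - 1 / (k : ℝ)) ^ (k - b) * f Sb :=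
  greedy_continuation_guarantee_general f k b hmono hsub Sb T h0 hgreedy Sopt hcard
end

section
/- For a monotone submodular f : 2^V → ℝ and any partial greedy solution S_a with a ≤ k, the optimal size-k value satisfies f(S°_k) ≤ f(S_a) + Σ_{v ∈ M} (f(S_a ∪ {v}) − f(S_a)), where M is a set of k elements of V \ S_a with the k largest marginal gains with respect to S_a. -/
lemma marginal_sum_bound {V : Type*} [DecidableEq V]
    (f : Finset V → ℝ)
    (hsub : ∀ S T : Finset V, S ⊆ T → ∀ v : V,
      f (insert v S) - f S ≥ f (insert v T) - f T)
    (Sa : Finset V) :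
    ∀ T : Finset V, f (Sa ∪ T) - f Sa ≤ ∑ v ∈ T, (f (insert v Sa) - f Sa) := by
  intro T
  induction T using Finset.induction_on with
  | empty => simp
  | @insert a T hnotmem ih =>
    rw [Finset.sum_insert hnotmem]
    have h1 : f (Sa ∪ insert a T) - f (Sa ∪ T) ≤ f (insert a Sa) - f Sa := by
      have := hsub Sa (Sa ∪ T) Finset.subset_union_left a
      have heq : Sa ∪ insert a T = insert a (Sa ∪ T) := by
        ext x; simp [or_comm, or_left_comm]
      rw [heq]; linarith
    linarith

/-- Upper bound on the optimum: `f(S°_k) ≤ f(S_a) + Σ_{v ∈ M} (f(S_a ∪ {v}) − f(S_a))`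
where `M` consists of `k` elements of `V \ S_a` with the largest marginal gains. -/
theorem optimum_upper_bound {V : Type*} [Fintype V] [DecidableEq V]
    (f : Finset V → ℝ) (k : ℕ) (hk : 1 ≤ k)
    (hmono : ∀ S T : Finset V, S ⊆ T → f S ≤ f T)
    (hsub : ∀ S T : Finset V, S ⊆ T → ∀ v : V,
      f (insert v S) - f S ≥ f (insert v T) - f T)
    (Sa M Sopt : Finset V)
    (hM : M ⊆ Finset.univ \ Sa) (hMcard : M.card = k)
    (htop : ∀ u ∈ M, ∀ v : V, v ∉ Sa → v ∉ M →
      f (insert v Sa) - f Sa ≤ f (insert u Sa) - f Sa)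
    (hcard : Sopt.card ≤ k) :
    f Sopt ≤ f Sa + ∑ v ∈ M, (f (insert v Sa) - f Sa) := by
  set g : V → ℝ := fun v => f (insert v Sa) - f Sa with hg
  have hg0 : ∀ v, 0 ≤ g v := fun v =>
    sub_nonneg.mpr (hmono _ _ (Finset.subset_insert v Sa))
  set T : Finset V := Sopt \ Sa with hT
  have step1 : f Sopt ≤ f (Sa ∪ T) := by
    apply hmono
    intro x hx
    by_cases h : x ∈ Sa <;> simp [hT, hx, h]
  have step2 : f (Sa ∪ T) - f Sa ≤ ∑ v ∈ T, g v :=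
    marginal_sum_bound f hsub Sa T
  -- step 3 : ∑_{T} g ≤ ∑_{M} g
  have hMne : M.Nonempty := Finset.card_pos.mp (by omega)
  set m : ℝ := M.inf' hMne g with hm
  have hTcard : T.card ≤ k := le_trans (Finset.card_le_card (Finset.sdiff_subset)) hcard
  -- elements of T \ M have g ≤ m
  have hle_m : ∀ v ∈ T \ M, g v ≤ m := by
    intro v hv
    rw [Finset.mem_sdiff] at hv
    obtain ⟨hvT, hvM⟩ := hv
    have hvSa : v ∉ Sa := (Finset.mem_sdiff.mp hvT).2
    exact Finset.le_inf' hMne g (fun u hu => htop u hu v hvSa hvM)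
  have hcards : (T \ M).card ≤ (M \ T).card := by
    have h1 := Finset.card_sdiff_add_card_inter T M
    have h2 := Finset.card_sdiff_add_card_inter M T
    have h3 : (T ∩ M).card = (M ∩ T).card := by rw [Finset.inter_comm]
    omega
  obtain ⟨S, hS, hScard⟩ := Finset.exists_subset_card_eq hcards
  have hsum1 : ∑ v ∈ T \ M, g v ≤ (T \ M).card • m :=
    Finset.sum_le_card_nsmul _ _ _ hle_m
  have hsum2 : S.card • m ≤ ∑ v ∈ S, g v :=
    Finset.card_nsmul_le_sum _ _ _ (fun u hu =>
      Finset.inf'_le g ((Finset.sdiff_subset) (hS hu)))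
  have hsum3 : ∑ v ∈ S, g v ≤ ∑ v ∈ M \ T, g v :=
    Finset.sum_le_sum_of_subset_of_nonneg hS (fun v _ _ => hg0 v)
  have step3 : ∑ v ∈ T, g v ≤ ∑ v ∈ M, g v := by
    have hTsplit : ∑ v ∈ T, g v = ∑ v ∈ T ∩ M, g v + ∑ v ∈ T \ M, g v := by
      rw [← Finset.sum_inter_add_sum_sdiff]
    have hMsplit : ∑ v ∈ M, g v = ∑ v ∈ M ∩ T, g v + ∑ v ∈ M \ T, g v := by
      rw [← Finset.sum_inter_add_sum_sdiff]
    rw [hTsplit, hMsplit, Finset.inter_comm T M]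
    have : ∑ v ∈ T \ M, g v ≤ ∑ v ∈ M \ T, g v := by
      calc ∑ v ∈ T \ M, g v ≤ (T \ M).card • m := hsum1
        _ = S.card • m := by rw [hScard]
        _ ≤ ∑ v ∈ S, g v := hsum2
        _ ≤ ∑ v ∈ M \ T, g v := hsum3
    linarith
  linarith
end
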